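/- For any infinitary propositional formula F over σ, any set A ⊆ σ of atoms disjoint from the set P(F) of strictly positive atoms of F, and any interpretation I, if I satisfies F then I \ A satisfies the reduct F^I. -/

import Mathlib

/-- Infinitary propositional formulas over signature `σ`:
atoms, conjunctions and disjunctions of (index-)sets of formulas, implication. -/
inductive Formula (σ : Type) : Type 1
  | atom : σ → Formula σ
  | conj : (ι : Type) → (ι → Formula σ) → Formula σ
  | disj : (ι : Type) → (ι → Formula σ) → Formula σ
  | imp : Formula σ → Formula σ → Formula σ

namespace Formula

variable {σ : Type}

/-- `⊥` is the empty disjunction. -/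
def bot : Formula σ := Formula.disj Empty (fun e => e.elim)

/-- Binary conjunction `F ∧ G`. -/
def and (F G : Formula σ) : Formula σ := Formula.conj Bool (fun b => if b then F else G)

/-- Binary disjunction `F ∨ G`. -/
def or (F G : Formula σ) : Formula σ := Formula.disj Bool (fun b => if b then F else G)

/-- Negation `¬F` abbreviates `F → ⊥`. -/
def neg (F : Formula σ) : Formula σ := Formula.imp F bot

/-- Conjunction of a set of atoms. -/
def conjAtoms (S : Set σ) : Formula σ := Formula.conj S (fun p => Formula.atom p.val)

/-- Satisfaction of an infinitary formula by an interpretation `I ⊆ σ`. -/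
def Sat (I : Set σ) : Formula σ → Prop
  | .atom p => p ∈ I
  | .conj _ f => ∀ i, Sat I (f i)
  | .disj _ f => ∃ i, Sat I (f i)
  | .imp F G => Sat I F → Sat I G

open Classical in
/-- The reduct `F^I`. -/
noncomputable def reduct (I : Set σ) : Formula σ → Formula σ
  | .atom p => if p ∈ I then Formula.atom p else bot
  | .conj ι f => Formula.conj ι (fun i => reduct I (f i))
  | .disj ι f => Formula.disj ι (fun i => reduct I (f i))
  | .imp F G => if Sat I (Formula.imp F G) then Formula.imp (reduct I F) (reduct I G) else bot

/-- `I` is an `A`-stable model of `F`: `I` is minimal w.r.t. `≤_A`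
(`J ≤_A I` iff `J ⊆ I` and `I \ J ⊆ A`) among interpretations satisfying `F^I`. -/
def AStable (A : Set σ) (I : Set σ) (F : Formula σ) : Prop :=
  Sat I (reduct I F) ∧ ∀ J : Set σ, J ⊆ I → I \ J ⊆ A → Sat J (reduct I F) → J = I

/-- A stable model is a `σ`-stable model. -/
def Stable (I : Set σ) (F : Formula σ) : Prop := AStable Set.univ I F

/-- The strictly positive atoms `P(F)`. -/
def spos : Formula σ → Set σ
  | .atom p => {p}
  | .conj _ f => ⋃ i, spos (f i)
  | .disj _ f => ⋃ i, spos (f i)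
  | .imp _ H => spos H

/-- `F` is (syntactically) the formula `⊥`, i.e. an empty disjunction. -/
def IsBot : Formula σ → Prop
  | .disj ι _ => IsEmpty ι
  | _ => False

open Classical in
mutual
/-- Positive nonnegated atoms `Pnn(F)`. -/
noncomputable def pnn : Formula σ → Set σ
  | .atom p => {p}
  | .conj _ f => ⋃ i, pnn (f i)
  | .disj _ f => ⋃ i, pnn (f i)
  | .imp G H => if IsBot H then ∅ else nnn G ∪ pnn H

/-- Negative nonnegated atoms `Nnn(F)`. -/
noncomputable def nnn : Formula σ → Set σ
  | .atom _ => ∅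
  | .conj _ f => ⋃ i, nnn (f i)
  | .disj _ f => ⋃ i, nnn (f i)
  | .imp G H => if IsBot H then ∅ else pnn G ∪ nnn H
end

/-- The rules of a formula, as antecedent/consequent pairs. -/
def rules : Formula σ → Set (Formula σ × Formula σ)
  | .atom _ => ∅
  | .conj _ f => ⋃ i, rules (f i)
  | .disj _ f => ⋃ i, rules (f i)
  | .imp G H => insert (G, H) (rules H)

/-- Edge relation of the positive dependency graph `DG_A[F]` (vertex set `A`). -/
noncomputable def DGEdge (F : Formula σ) (A : Set σ) (p q : σ) : Prop :=
  p ∈ A ∧ q ∈ A ∧ ∃ R ∈ rules F, p ∈ spos R.2 ∧ q ∈ pnn R.1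

/-- The atoms occurring in a formula. -/
def atoms : Formula σ → Set σ
  | .atom p => {p}
  | .conj _ f => ⋃ i, atoms (f i)
  | .disj _ f => ⋃ i, atoms (f i)
  | .imp G H => atoms G ∪ atoms H

/-- `G` is a definition for the set `Q` of atoms: a conjunction of formulas
`H ∧ C^∧ → q` with `q ∈ Q`, `C ⊆ Q`, and no atom of `Q` occurring in `H`. -/
def IsDefinition (Q : Set σ) (G : Formula σ) : Prop :=
  ∃ (ι : Type) (g : ι → Formula σ), G = Formula.conj ι g ∧
    ∀ i, ∃ (H : Formula σ) (C : Set σ) (q : σ),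
      q ∈ Q ∧ C ⊆ Q ∧ (∀ p ∈ Q, p ∉ atoms H) ∧
      g i = Formula.imp (Formula.and H (conjAtoms C)) (Formula.atom q)

end Formula

section Graph

variable {V : Type*}

/-- An infinite walk in the directed graph with edge relation `E`. -/
def IsInfWalk (E : V → V → Prop) (w : ℕ → V) : Prop := ∀ i, E (w i) (w (i + 1))

/-- The partition `{P₁, P₂}` is infinitely separable: every infinite walk
visits `P₁` or `P₂` only finitely often. -/
def InfSeparable (E : V → V → Prop) (P1 P2 : Set V) : Prop :=
  ∀ w : ℕ → V, IsInfWalk E w → {i | w i ∈ P1}.Finite ∨ {i | w i ∈ P2}.Finite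

/-- `u` and `v` are in the same strongly connected component:
each is reachable from the other. -/
def SameSCC (E : V → V → Prop) (u v : V) : Prop :=
  Relation.ReflTransGen E u v ∧ Relation.ReflTransGen E v u

/-- The partition `{P₁, P₂}` is separable: every strongly connected
component is contained in `P₁` or in `P₂`. -/
def Separable (E : V → V → Prop) (P1 P2 : Set V) : Prop :=
  ∀ u v, SameSCC E u v → ((u ∈ P1 ∧ v ∈ P1) ∨ (u ∈ P2 ∧ v ∈ P2))

end Graph

/-!
Induction on `F`. Removing `A` can only falsify atoms of `A`, which never occur strictly
positively, so atoms and the connectives `∧`, `∨` go through directly. An implication `G → H`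
true in `I` survives in the reduct as `G^I → H^I`; any model of `G^I` is already enough to make
`I ⊨ G`, hence `I ⊨ H`, and the induction hypothesis for `H` gives `I \ A ⊨ H^I`.
-/

namespace Formula

variable {σ : Type}

theorem not_sat_bot (J : Set σ) : ¬ Sat J (bot : Formula σ) := fun ⟨e, _⟩ => e.elim

theorem sat_of_sat_reduct {I J : Set σ} {F : Formula σ} (h : Sat J (reduct I F)) : Sat I F := by
  induction F with
  | atom p =>
    unfold reduct at h
    split at h
    · assumption
    · exact absurd h (not_sat_bot J)
  | conj ι f ih => exact fun i => ih i (h i)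
  | disj ι f ih =>
    obtain ⟨i, hi⟩ := h
    exact ⟨i, ih i hi⟩
  | imp G H _ _ =>
    unfold reduct at h
    split at h
    · assumption
    · exact absurd h (not_sat_bot J)

theorem spos_subset_spos_conj {ι : Type} (f : ι → Formula σ) (i : ι) :
    spos (f i) ⊆ spos (conj ι f) :=
  Set.subset_iUnion (fun i => spos (f i)) i

theorem spos_subset_spos_disj {ι : Type} (f : ι → Formula σ) (i : ι) :
    spos (f i) ⊆ spos (disj ι f) :=
  Set.subset_iUnion (fun i => spos (f i)) i

end Formula

/-- if `A` is disjoint from `P(F)` and `I ⊨ F`, then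
`I \ A ⊨ F^I`. -/
theorem sat_reduct_diff_of_disjoint_spos {σ : Type} (F : Formula σ)
    (A I : Set σ) (hA : Disjoint A (Formula.spos F)) (h : Formula.Sat I F) :
    Formula.Sat (I \ A) (Formula.reduct I F) := by
  induction F with
  | atom p =>
    have hpA : p ∉ A := Set.disjoint_right.mp hA rfl
    simp only [Formula.reduct, if_pos (show p ∈ I from h)]
    exact ⟨h, hpA⟩
  | conj ι f ih =>
    exact fun i => ih i (hA.mono_right (Formula.spos_subset_spos_conj f i)) (h i)
  | disj ι f ih =>
    obtain ⟨i, hi⟩ := h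
    exact ⟨i, ih i (hA.mono_right (Formula.spos_subset_spos_disj f i)) hi⟩
  | imp G H _ ihH =>
    simp only [Formula.reduct, if_pos h]
    exact fun hG => ihH hA (h (Formula.sat_of_sat_reduct hG))
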